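/- There exists a finite constant C₀, depending only on h, such that for all β ≥ C₀ and all L ≥ 2(n₀+2): Σ_{σ ∈ B₂} Σ_{σ'} min(e^{−βℍ(σ)}, e^{−βℍ(σ')}) ≤ C₀·|Λ_L|·e^{−βΓ_c}·( |Λ_L|·e^{−2β} + e^{−(10−h)β} ), where B₂ = R⁺ \ Rᵃ, the inner sum runs over all σ' ∈ V₋₁ \ ((B \ R) ∪ (R⁺ \ Rᵃ)) which differ from σ at exactly one site, and Γ_c = 4(n₀+1) − h·(n₀(n₀+1)+1−|Λ_L|). -/

import Mathlib

open Classical Finset Filter Topology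

noncomputable section

namespace BC

/-- Sites of the two-dimensional discrete torus of side `L`. -/
abbrev Site (L : ℕ) := ZMod L × ZMod L

/-- Spin configurations: a spin `s : Fin 3` at a site encodes the value `s - 1 ∈ {-1,0,1}`. -/
abbrev Cfg (L : ℕ) := Site L → Fin 3

/-- The spin value in `{-1, 0, 1}` encoded by an element of `Fin 3`. -/
def sval (s : Fin 3) : ℤ := (s : ℤ) - 1

/-- The critical length `n₀ = ⌊2/h⌋`. -/
def n0 (h : ℝ) : ℕ := ⌊(2 : ℝ) / h⌋₊

/-- The configuration `-1` with all spins equal to `-1`. -/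
def cminus (L : ℕ) : Cfg L := fun _ => 0

/-- The configuration `0` with all spins equal to `0`. -/
def czero (L : ℕ) : Cfg L := fun _ => 1

/-- The configuration `+1` with all spins equal to `+1`. -/
def cplus (L : ℕ) : Cfg L := fun _ => 2

/-- Nearest-neighbour relation on the torus. -/
def nbr (L : ℕ) (x y : Site L) : Prop :=
  y = x + (1, 0) ∨ y = x - (1, 0) ∨ y = x + (0, 1) ∨ y = x - (0, 1)

/-- The four nearest neighbours of a site, as a finite set. -/
def nbrFinset (L : ℕ) (x : Site L) : Finset (Site L) :=
  {x + (1, 0), x - (1, 0), x + (0, 1), x - (0, 1)}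

/-- The torus viewed as a simple graph with nearest-neighbour adjacency. -/
def torusGraph (L : ℕ) : SimpleGraph (Site L) where
  Adj x y := x ≠ y ∧ nbr L x y
  symm := by
    constructor
    rintro x y ⟨hne, hn⟩
    refine ⟨hne.symm, ?_⟩
    unfold nbr at hn ⊢
    rcases hn with h1 | h1 | h1 | h1 <;> subst h1 <;> simp
  loopless := by constructor; rintro x ⟨hne, -⟩; exact hne rfl

/-- The `s × t` rectangle of sites with lower-left corner `a`. -/
def rect (L : ℕ) (a : Site L) (s t : ℕ) : Finset (Site L) :=
  (Finset.range s ×ˢ Finset.range t).image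
    (fun p => (a.1 + (p.1 : ZMod L), a.2 + (p.2 : ZMod L)))

/-- The four corners of the `s × t` rectangle with lower-left corner `a`. -/
def corners (L : ℕ) (a : Site L) (s t : ℕ) : Finset (Site L) :=
  {(a.1, a.2), (a.1 + ((s - 1 : ℕ) : ZMod L), a.2),
   (a.1, a.2 + ((t - 1 : ℕ) : ZMod L)),
   (a.1 + ((s - 1 : ℕ) : ZMod L), a.2 + ((t - 1 : ℕ) : ZMod L))}

/-- `S` is an `n × (n+1)` rectangle (in either orientation). -/
def isCritRect (L n : ℕ) (S : Finset (Site L)) : Prop :=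
  ∃ a : Site L, S = rect L a n (n + 1) ∨ S = rect L a (n + 1) n

/-- `S` is an `n × (n+1)` rectangle plus an extra site attached to a longest side. -/
def critRl (L n : ℕ) (S : Finset (Site L)) : Prop :=
  ∃ (a : Site L) (i : ℕ), i ≤ n ∧
    (S = insert (a.1 + (i : ZMod L), a.2 - 1) (rect L a (n + 1) n) ∨
     S = insert (a.1 + (i : ZMod L), a.2 + (n : ZMod L)) (rect L a (n + 1) n) ∨
     S = insert (a.1 - 1, a.2 + (i : ZMod L)) (rect L a n (n + 1)) ∨
     S = insert (a.1 + (n : ZMod L), a.2 + (i : ZMod L)) (rect L a n (n + 1)))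

/-- `S` is an `n × (n+1)` rectangle plus an extra site attached to a longest side,
next to a corner of the rectangle. -/
def critRlc (L n : ℕ) (S : Finset (Site L)) : Prop :=
  ∃ (a : Site L) (i : ℕ), i ≤ n ∧ (i = 0 ∨ i = n) ∧
    (S = insert (a.1 + (i : ZMod L), a.2 - 1) (rect L a (n + 1) n) ∨
     S = insert (a.1 + (i : ZMod L), a.2 + (n : ZMod L)) (rect L a (n + 1) n) ∨
     S = insert (a.1 - 1, a.2 + (i : ZMod L)) (rect L a n (n + 1)) ∨
     S = insert (a.1 + (n : ZMod L), a.2 + (i : ZMod L)) (rect L a n (n + 1)))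

/-- `S` is an `n × (n+1)` rectangle plus an extra site attached to a longest side,
away from the corners of the rectangle. -/
def critRli (L n : ℕ) (S : Finset (Site L)) : Prop :=
  ∃ (a : Site L) (i : ℕ), 0 < i ∧ i < n ∧
    (S = insert (a.1 + (i : ZMod L), a.2 - 1) (rect L a (n + 1) n) ∨
     S = insert (a.1 + (i : ZMod L), a.2 + (n : ZMod L)) (rect L a (n + 1) n) ∨
     S = insert (a.1 - 1, a.2 + (i : ZMod L)) (rect L a n (n + 1)) ∨
     S = insert (a.1 + (n : ZMod L), a.2 + (i : ZMod L)) (rect L a n (n + 1)))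

/-- `S` is an `n × (n+1)` rectangle plus an extra site attached to a shortest side. -/
def critRs (L n : ℕ) (S : Finset (Site L)) : Prop :=
  ∃ (a : Site L) (j : ℕ), j < n ∧
    (S = insert (a.1 - 1, a.2 + (j : ZMod L)) (rect L a (n + 1) n) ∨
     S = insert (a.1 + ((n + 1 : ℕ) : ZMod L), a.2 + (j : ZMod L)) (rect L a (n + 1) n) ∨
     S = insert (a.1 + (j : ZMod L), a.2 - 1) (rect L a n (n + 1)) ∨
     S = insert (a.1 + (j : ZMod L), a.2 + ((n + 1 : ℕ) : ZMod L)) (rect L a n (n + 1)))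

/-- `S` is an `n × (n+1)` rectangle plus two mutually adjacent extra sites, each attached
to a longest side. -/
def critRl2 (L n : ℕ) (S : Finset (Site L)) : Prop :=
  ∃ (a : Site L) (i : ℕ), i + 1 ≤ n ∧
    (S = rect L a (n + 1) n ∪
        {(a.1 + (i : ZMod L), a.2 - 1), (a.1 + (i : ZMod L) + 1, a.2 - 1)} ∨
     S = rect L a (n + 1) n ∪
        {(a.1 + (i : ZMod L), a.2 + (n : ZMod L)), (a.1 + (i : ZMod L) + 1, a.2 + (n : ZMod L))} ∨
     S = rect L a n (n + 1) ∪
        {(a.1 - 1, a.2 + (i : ZMod L)), (a.1 - 1, a.2 + (i : ZMod L) + 1)} ∨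
     S = rect L a n (n + 1) ∪
        {(a.1 + (n : ZMod L), a.2 + (i : ZMod L)), (a.1 + (n : ZMod L), a.2 + (i : ZMod L) + 1)})

section

variable (L : ℕ) [NeZero L]

/-- The Blume-Capel Hamiltonian with zero chemical potential and magnetic field `h`. -/
def ham (h : ℝ) (σ : Cfg L) : ℝ :=
  (∑ x : Site L,
     (((sval (σ (x + (1, 0))) : ℝ) - (sval (σ x) : ℝ)) ^ 2 +
      ((sval (σ (x + (0, 1))) : ℝ) - (sval (σ x) : ℝ)) ^ 2)) -
  h * ∑ x : Site L, (sval (σ x) : ℝ)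

/-- The set `A(σ)` of sites where the spin differs from `-1`. -/
def Asites (σ : Cfg L) : Finset (Site L) := univ.filter fun x => σ x ≠ 0

/-- `N(σ)`, the number of spins different from `-1`. -/
def Nsz (σ : Cfg L) : ℕ := (Asites L σ).card

/-- The set of sites where the spin differs from `0`. -/
def A0sites (σ : Cfg L) : Finset (Site L) := univ.filter fun x => σ x ≠ 1

/-- `σ^{x,+}` : flip the spin at `x` by `+1 mod 3`. -/
def flipUp (σ : Cfg L) (x : Site L) : Cfg L := Function.update σ x (σ x + 1)

/-- `σ^{x,-}` : flip the spin at `x` by `-1 mod 3`. -/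
def flipDown (σ : Cfg L) (x : Site L) : Cfg L := Function.update σ x (σ x - 1)

/-- Metropolis jump rate. -/
def rate (h β : ℝ) (σ τ : Cfg L) : ℝ := Real.exp (-β * max (ham L h τ - ham L h σ) 0)

/-- Holding rate `λ_β`. -/
def lam (h β : ℝ) (σ : Cfg L) : ℝ :=
  ∑ x : Site L, (rate L h β σ (flipUp L σ x) + rate L h β σ (flipDown L σ x))

/-- One-step average of `u` under the jump probabilities `p_β = R_β/λ_β`. -/
def avg (h β : ℝ) (u : Cfg L → ℝ) (σ : Cfg L) : ℝ :=
  (∑ x : Site L,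
     (rate L h β σ (flipUp L σ x) * u (flipUp L σ x) +
      rate L h β σ (flipDown L σ x) * u (flipDown L σ x))) / lam L h β σ

/-- `u` is harmonic (w.r.t. the jump probabilities `p_β`) on `D`. -/
def harmOn (h β : ℝ) (u : Cfg L → ℝ) (D : Set (Cfg L)) : Prop :=
  ∀ η ∈ D, u η = avg L h β u η

/-- Unnormalised Gibbs weight `e^{-β ℍ(σ)}`. -/
def gw (h β : ℝ) (σ : Cfg L) : ℝ := Real.exp (-β * ham L h σ)

/-- Two configurations differ at exactly one site. -/
def oneDiff (σ τ : Cfg L) : Prop := (univ.filter fun x => σ x ≠ τ x).card = 1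

/-- Dirichlet form of the chain reflected in `V`. -/
def dirV (h β : ℝ) (V : Set (Cfg L)) (f : Cfg L → ℝ) : ℝ :=
  (1 / 2) * ∑ σ : Cfg L, ∑ τ : Cfg L,
    if σ ∈ V ∧ τ ∈ V ∧ oneDiff L σ τ
    then min (gw L h β σ) (gw L h β τ) * (f τ - f σ) ^ 2 else 0

/-- Capacity (via the Dirichlet principle) for the chain reflected in `V`. -/
def capV (h β : ℝ) (V A B : Set (Cfg L)) : ℝ :=
  sInf { e : ℝ | ∃ f : Cfg L → ℝ, (∀ σ, 0 ≤ f σ ∧ f σ ≤ 1) ∧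
        (∀ σ ∈ A, f σ = 1) ∧ (∀ σ ∈ B, f σ = 0) ∧ e = dirV L h β V f }

/-- Dirichlet form of the full chain. -/
def dirForm (h β : ℝ) (f : Cfg L → ℝ) : ℝ :=
  (1 / 2) * ∑ σ : Cfg L, ∑ x : Site L,
    (min (gw L h β σ) (gw L h β (flipUp L σ x)) * (f (flipUp L σ x) - f σ) ^ 2 +
     min (gw L h β σ) (gw L h β (flipDown L σ x)) * (f (flipDown L σ x) - f σ) ^ 2)

/-- Capacity via the Dirichlet variational principle. -/
def capa (h β : ℝ) (A B : Set (Cfg L)) : ℝ :=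
  sInf { e : ℝ | ∃ f : Cfg L → ℝ, (∀ σ, 0 ≤ f σ ∧ f σ ≤ 1) ∧
        (∀ σ ∈ A, f σ = 1) ∧ (∀ σ ∈ B, f σ = 0) ∧ e = dirForm L h β f }

/-- Holding rate of the chain reflected in `V`. -/
def lamV (h β : ℝ) (V : Set (Cfg L)) (σ : Cfg L) : ℝ :=
  ∑ x : Site L,
    ((if flipUp L σ x ∈ V then rate L h β σ (flipUp L σ x) else 0) +
     (if flipDown L σ x ∈ V then rate L h β σ (flipDown L σ x) else 0))

/-- One-step average for the chain reflected in `V`. -/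
def avgV (h β : ℝ) (V : Set (Cfg L)) (u : Cfg L → ℝ) (σ : Cfg L) : ℝ :=
  (∑ x : Site L,
    ((if flipUp L σ x ∈ V then rate L h β σ (flipUp L σ x) * u (flipUp L σ x) else 0) +
     (if flipDown L σ x ∈ V then rate L h β σ (flipDown L σ x) * u (flipDown L σ x) else 0))) /
  lamV L h β V σ

/-- `R` : `0`-spins forming an `n × (n+1)` rectangle in a sea of `-1`-spins. -/
def setR (n : ℕ) : Set (Cfg L) :=
  {σ | (∀ x, σ x ≠ 2) ∧ isCritRect L n (Asites L σ)}

/-- `B` : configurations with exactly `n(n+1)` spins different from `-1`. -/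
def setB (n : ℕ) : Set (Cfg L) := {σ | Nsz L σ = n * (n + 1)}

/-- `R⁺` : an `n × (n+1)` rectangle of `0`-spins plus one extra spin (`0` or `+1`)
outside the rectangle, in a sea of `-1`-spins. -/
def setRplus (n : ℕ) : Set (Cfg L) :=
  {σ | ∃ (S : Finset (Site L)) (z : Site L), isCritRect L n S ∧ z ∉ S ∧
       Asites L σ = insert z S ∧ ∀ x ∈ S, σ x = 1}

/-- `Rᵃ` : an `n × (n+1)` rectangle of `0`-spins plus one extra `0`-spin attached to the
rectangle, in a sea of `-1`-spins. -/
def setRa (n : ℕ) : Set (Cfg L) :=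
  {σ | ∃ (S : Finset (Site L)) (z : Site L), isCritRect L n S ∧ z ∉ S ∧
       Asites L σ = insert z S ∧ (∀ x ∈ S, σ x = 1) ∧ σ z = 1 ∧ ∃ y ∈ S, nbr L z y}

/-- The valley `V₋₁` of the configuration `-1`. -/
def valleyM (n : ℕ) : Set (Cfg L) := {σ | Nsz L σ ≤ n * (n + 1)} ∪ setRplus L n

/-- `B⁺`, the boundary of the valley of `-1`. -/
def setBplus (n : ℕ) : Set (Cfg L) := (setB L n \ setR L n) ∪ setRplus L n

/-- `Rˡ` : critical droplet with the protuberance attached to a longest side. -/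
def setRl (n : ℕ) : Set (Cfg L) :=
  {σ | (∀ x, σ x ≠ 2) ∧ critRl L n (Asites L σ) ∧ Nsz L σ = n * (n + 1) + 1}

/-- `Rˡᶜ` : protuberance attached to a longest side next to a corner. -/
def setRlc (n : ℕ) : Set (Cfg L) :=
  {σ | (∀ x, σ x ≠ 2) ∧ critRlc L n (Asites L σ) ∧ Nsz L σ = n * (n + 1) + 1}

/-- `Rˡⁱ` : protuberance attached to a longest side away from the corners. -/
def setRli (n : ℕ) : Set (Cfg L) :=
  {σ | (∀ x, σ x ≠ 2) ∧ critRli L n (Asites L σ) ∧ Nsz L σ = n * (n + 1) + 1}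

/-- `Rˢ` : protuberance attached to a shortest side. -/
def setRs (n : ℕ) : Set (Cfg L) :=
  {σ | (∀ x, σ x ≠ 2) ∧ critRs L n (Asites L σ) ∧ Nsz L σ = n * (n + 1) + 1}

/-- `Rˡ₀` : critical droplet of `+1`-spins in a sea of `0`-spins, protuberance on a
longest side. -/
def setRl0 (n : ℕ) : Set (Cfg L) :=
  {σ | (∀ x, σ x ≠ 0) ∧ critRl L n (A0sites L σ) ∧ (A0sites L σ).card = n * (n + 1) + 1}

/-- The energy `Γ_c` of a critical droplet. -/
def GammaC (h : ℝ) : ℝ :=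
  4 * ((n0 h : ℝ) + 1) - h * (((n0 h * (n0 h + 1) + 1 : ℕ) : ℝ) - (L : ℝ) ^ 2)

/-- `δ₁(β) = e^{-hβ} + |Λ|^{1/2} e^{-(2-h)β} + |Λ| e^{-(4-h)β}`. -/
def delta1 (h β : ℝ) : ℝ :=
  Real.exp (-h * β) + (L : ℝ) * Real.exp (-(2 - h) * β) +
    (L : ℝ) ^ 2 * Real.exp (-(4 - h) * β)

/-- `δ₅(β) = e^{-[(n₀+1)h-2]β} + e^{-hβ} + |Λ|^{3/2} e^{-(2-h)β}`. -/
def delta5 (h β : ℝ) : ℝ :=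
  Real.exp (-(((n0 h : ℝ) + 1) * h - 2) * β) + Real.exp (-h * β) +
    (L : ℝ) ^ 3 * Real.exp (-(2 - h) * β)

/-- `δ(β) = |Λ|^{1/2} e^{-[(n₀+1)h-2]β} + |Λ|^{1/2} e^{-hβ} + |Λ|² e^{-(2-h)β}`. -/
def deltaP (h β : ℝ) : ℝ :=
  (L : ℝ) * Real.exp (-(((n0 h : ℝ) + 1) * h - 2) * β) + (L : ℝ) * Real.exp (-h * β) +
    (L : ℝ) ^ 4 * Real.exp (-(2 - h) * β)

end

end BC

/-!
Every configuration of `R⁺ \ Rᵃ` costs at least `Γ_c + 2`. Such a configuration is a rectangle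
island of `0`-spins with one extra spin `c ∈ {0, +1}` at a site `z` outside it. Along every row
and every column that meets the rectangle the periodic spin profile jumps at least twice, so the
island alone has `2 (s + t)` broken bonds; in each lattice direction the rectangle does not
contain both neighbours of `z` (and, when `c = 0`, contains neither), so the extra spin adds at
least `2 (c + 1)` per direction. Since `|R⁺| ≤ 6 |Λ|²` and only the `3 N(σ)` flips of spins of
`A(σ)` can stay in `V₋₁`, the whole sum is at most `18 (n₀ (n₀ + 1) + 1) |Λ|² e^{-β (Γ_c + 2)}`,
which is already the `|Λ|² e^{-2β}` part of the bound.
-/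

namespace BC

section BondEnergy

variable {G : Type*} [AddCommGroup G] [Fintype G]

def bondEnergy (e : G) (u : G → ℤ) : ℤ := ∑ x, (u (x + e) - u x) ^ 2

theorem bondEnergy_nonneg (e : G) (u : G → ℤ) : 0 ≤ bondEnergy e u :=
  sum_nonneg fun _ _ => sq_nonneg _

theorem two_le_bondEnergy {e x : G} {u : G → ℤ} (hx : u (x + e) ≠ u x) :
    2 ≤ bondEnergy e u := by
  -- the increments of `u` along the cycles of `e` telescope to zero, so one jump forces another
  have htel : ∑ y, (u (y + e) - u y) = 0 := by
    rw [sum_sub_distrib, sub_eq_zero]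
    exact Fintype.sum_equiv (Equiv.addRight e) _ _ fun _ => rfl
  obtain ⟨y, hy, hyu⟩ : ∃ y ∈ univ.erase x, u (y + e) - u y ≠ 0 := by
    apply exists_ne_zero_of_sum_ne_zero
    rw [sum_erase_eq_sub (mem_univ x), htel, zero_sub, neg_ne_zero, sub_ne_zero]
    exact hx
  have one_le_sq : ∀ d : ℤ, d ≠ 0 → 1 ≤ d ^ 2 := fun d hd =>
    (one_le_sq_iff_one_le_abs d).2 (Int.one_le_abs hd)
  rw [bondEnergy, ← add_sum_erase _ _ (mem_univ x)]
  have hy2 := single_le_sum (f := fun w => (u (w + e) - u w) ^ 2) (fun _ _ => sq_nonneg _) hy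
  linarith [one_le_sq _ (sub_ne_zero.2 hx), one_le_sq _ hyu]

theorem bondEnergy_update [DecidableEq G] {e : G} (he : e ≠ 0) (u : G → ℤ) (z : G) (v : ℤ) :
    bondEnergy e (Function.update u z v) = bondEnergy e u +
      ((u (z + e) - v) ^ 2 - (u (z + e) - u z) ^ 2) +
      ((v - u (z - e)) ^ 2 - (u z - u (z - e)) ^ 2) := by
  have hze : z + e ≠ z := by simpa using he
  have hze' : z - e ≠ z := by simpa using he
  unfold bondEnergy
  rw [add_assoc, ← sub_eq_iff_eq_add', ← sum_sub_distrib,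
    Fintype.sum_eq_add z (z - e) hze'.symm]
  · simp [Function.update_of_ne hze, Function.update_of_ne hze']
  · rintro x ⟨hxz, hxze⟩
    have : x + e ≠ z := fun h => hxze (by rw [← h, add_sub_cancel_right])
    simp [Function.update_of_ne hxz, Function.update_of_ne this]

variable {H : Type*} [AddCommGroup H] [Fintype H]

theorem two_mul_card_le_bondEnergy_fst (e : G) (u : G × H → ℤ) (Y : Finset H)
    (hY : ∀ y ∈ Y, ∃ x, u (x + e, y) ≠ u (x, y)) : 2 * (#Y : ℤ) ≤ bondEnergy (e, 0) u := by
  have hrows : bondEnergy (e, 0) u = ∑ y, bondEnergy e (fun x => u (x, y)) := by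
    simp only [bondEnergy, Fintype.sum_prod_type_right, Prod.mk_add_mk, add_zero]
  rw [hrows]
  calc 2 * (#Y : ℤ) = ∑ _y ∈ Y, 2 := by rw [sum_const, nsmul_eq_mul, mul_comm]
    _ ≤ ∑ y ∈ Y, bondEnergy e (fun x => u (x, y)) :=
        sum_le_sum fun y hy => (hY y hy).elim fun _ hx => two_le_bondEnergy hx
    _ ≤ _ := sum_le_sum_of_subset_of_nonneg (subset_univ _) fun _ _ _ => bondEnergy_nonneg _ _

theorem two_mul_card_le_bondEnergy_snd (e : H) (u : G × H → ℤ) (X : Finset G)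
    (hX : ∀ x ∈ X, ∃ y, u (x, y + e) ≠ u (x, y)) : 2 * (#X : ℤ) ≤ bondEnergy (0, e) u := by
  have hcols : bondEnergy (0, e) u = ∑ x, bondEnergy e (fun y => u (x, y)) := by
    simp only [bondEnergy, Fintype.sum_prod_type, Prod.mk_add_mk, add_zero]
  rw [hcols]
  calc 2 * (#X : ℤ) = ∑ _x ∈ X, 2 := by rw [sum_const, nsmul_eq_mul, mul_comm]
    _ ≤ ∑ x ∈ X, bondEnergy e (fun y => u (x, y)) :=
        sum_le_sum fun x hx => (hX x hx).elim fun _ hy => two_le_bondEnergy hy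
    _ ≤ _ := sum_le_sum_of_subset_of_nonneg (subset_univ _) fun _ _ _ => bondEnergy_nonneg _ _

end BondEnergy

section Droplet

variable {α : Type*} [DecidableEq α]

/-- `0`-spins on `S` in a sea of `-1`-spins (encoded by `1` and `0` in `Fin 3`). -/
def island (S : Finset α) : α → Fin 3 := fun x => if x ∈ S then 1 else 0

def droplet (S : Finset α) (z : α) (c : Fin 3) : α → Fin 3 :=
  Function.update (island S) z c

theorem sval_island (S : Finset α) (x : α) :
    sval (island S x) = if x ∈ S then 0 else -1 := by
  unfold island; split_ifs <;> rfl

theorem sum_sval_droplet [Fintype α] {S : Finset α} {z : α} (hz : z ∉ S) (c : Fin 3) :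
    ∑ x, sval (droplet S z c x) = #S - Fintype.card α + (sval c + 1) := by
  have hisland : ∑ x, sval (island S x) = #S - Fintype.card α := by
    have hc : #{x | x ∉ S} + #S = Fintype.card α := by
      rw [filter_notMem_eq_sdiff, ← compl_eq_univ_sdiff, card_compl_add_card]
    simp only [sval_island, sum_ite, sum_const_zero, sum_const, smul_neg, nsmul_one]
    omega
  rw [← add_sum_erase _ _ (mem_univ z), sval_island, if_neg hz] at hisland
  rw [← add_sum_erase _ _ (mem_univ z), droplet, Function.update_self,
    sum_congr rfl fun x hx => by rw [Function.update_of_ne (ne_of_mem_erase hx)]]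
  linarith

theorem bondEnergy_droplet_ge {G : Type*} [AddCommGroup G] [Fintype G] [DecidableEq G]
    {S : Finset G} {z e : G} {c : Fin 3} (he : e ≠ 0) (hz : z ∉ S) (hc : c ≠ 0)
    (hcz : c = 2 ∨ (z + e ∉ S ∧ z - e ∉ S)) (hconv : ¬ (z + e ∈ S ∧ z - e ∈ S)) :
    bondEnergy e (sval ∘ island S) + 2 * (sval c + 1) ≤ bondEnergy e (sval ∘ droplet S z c) := by
  rw [droplet, Function.comp_update, bondEnergy_update he]
  simp only [Function.comp_apply, sval_island, if_neg hz]
  fin_cases c <;> split_ifs <;> simp_all [sval]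
  omega

end Droplet

section Torus

variable {L : ℕ}

theorem card_site [NeZero L] : Fintype.card (Site L) = L ^ 2 := by
  rw [Fintype.card_prod, ZMod.card, sq]

theorem one_ne_zero_of_two_le (hL : 2 ≤ L) : (1 : ZMod L) ≠ 0 := by
  intro h
  have := Nat.le_of_dvd one_pos ((ZMod.natCast_eq_zero_iff 1 L).1 (by exact_mod_cast h))
  omega

theorem val_neg_one_eq [NeZero L] : (-1 : ZMod L).val = L - 1 := by
  have hL := NeZero.one_le (n := L)
  have : (-1 : ZMod L) = ((L - 1 : ℕ) : ZMod L) := by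
    rw [Nat.cast_sub hL, ZMod.natCast_self]; ring
  rw [this, ZMod.val_cast_of_lt (by omega)]

theorem val_lt_of_val_add_one_lt_of_val_sub_one_lt [NeZero L] {p : ZMod L} {s : ℕ} (hs : s + 2 ≤ L)
    (h1 : (p + 1).val < s) (h2 : (p - 1).val < s) : p.val < s := by
  set k := (p - 1).val
  have hp : p = ((k + 1 : ℕ) : ZMod L) := by push_cast; rw [ZMod.natCast_zmod_val]; ring
  have hp1 : p + 1 = ((k + 2 : ℕ) : ZMod L) := by rw [hp]; push_cast; ring
  rw [hp1, ZMod.val_cast_of_lt (by omega)] at h1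
  rw [hp, ZMod.val_cast_of_lt (by omega)]
  omega

theorem card_image_add_natCast (c : ZMod L) {t : ℕ} (ht : t ≤ L) :
    #((range t).image fun j : ℕ => c + j) = t := by
  rw [card_image_of_injOn, card_range]
  intro i hi j hj hij
  have := congrArg ZMod.val (add_left_cancel hij)
  simp only [coe_range, Set.mem_Iio] at hi hj
  rwa [ZMod.val_cast_of_lt (by omega), ZMod.val_cast_of_lt (by omega)] at this

variable {s t : ℕ}

theorem mem_rect [NeZero L] (hs : s ≤ L) (ht : t ≤ L) {a x : Site L} :
    x ∈ rect L a s t ↔ (x.1 - a.1).val < s ∧ (x.2 - a.2).val < t := by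
  constructor
  · simp only [rect, mem_image, mem_product, mem_range]
    rintro ⟨⟨i, j⟩, ⟨hi, hj⟩, rfl⟩
    simp only [add_sub_cancel_left]
    rw [ZMod.val_cast_of_lt (by omega), ZMod.val_cast_of_lt (by omega)]
    exact ⟨hi, hj⟩
  · rintro ⟨h1, h2⟩
    simp only [rect, mem_image, mem_product, mem_range]
    exact ⟨((x.1 - a.1).val, (x.2 - a.2).val), ⟨h1, h2⟩, by simp⟩

theorem card_rect (hs : s ≤ L) (ht : t ≤ L) (a : Site L) : #(rect L a s t) = s * t := by
  rw [rect, card_image_of_injOn, card_product, card_range, card_range]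
  rintro ⟨i, j⟩ hij ⟨i', j'⟩ hij' he
  simp only [coe_product, coe_range, Set.mem_prod, Set.mem_Iio] at hij hij'
  simp only [Prod.mk.injEq, add_right_inj] at he
  have h1 := congrArg ZMod.val he.1
  have h2 := congrArg ZMod.val he.2
  rw [ZMod.val_cast_of_lt (by omega), ZMod.val_cast_of_lt (by omega)] at h1 h2
  rw [h1, h2]

end Torus

section Energy

variable {L : ℕ} [NeZero L] {s t : ℕ} {a z : Site L}

theorem ham_eq (h : ℝ) (σ : Cfg L) :
    ham L h σ = ((bondEnergy (1, 0) (sval ∘ σ) + bondEnergy (0, 1) (sval ∘ σ) : ℤ) : ℝ) -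
      h * ((∑ x, sval (σ x) : ℤ) : ℝ) := by
  simp only [ham, bondEnergy, Function.comp_apply]
  push_cast
  rw [sum_add_distrib]

theorem two_mul_add_le_bondEnergy_island (hs : 1 ≤ s) (ht : 1 ≤ t) (hsL : s < L) (htL : t < L) :
    2 * ((s : ℤ) + t) ≤ bondEnergy (1, 0) (sval ∘ island (rect L a s t)) +
      bondEnergy (0, 1) (sval ∘ island (rect L a s t)) := by
  have hrows := two_mul_card_le_bondEnergy_fst 1 (sval ∘ island (rect L a s t))
    ((range t).image fun j : ℕ => a.2 + j) (by
      simp only [mem_image, mem_range]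
      rintro _ ⟨j, hj, rfl⟩
      refine ⟨a.1 - 1, ?_⟩
      simp [sval_island, mem_rect hsL.le htL.le, val_neg_one_eq, ZMod.val_cast_of_lt (hj.trans htL)]
      omega)
  have hcols := two_mul_card_le_bondEnergy_snd 1 (sval ∘ island (rect L a s t))
    ((range s).image fun i : ℕ => a.1 + i) (by
      simp only [mem_image, mem_range]
      rintro _ ⟨i, hi, rfl⟩
      refine ⟨a.2 - 1, ?_⟩
      simp [sval_island, mem_rect hsL.le htL.le, val_neg_one_eq, ZMod.val_cast_of_lt (hi.trans hsL)]
      omega)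
  rw [card_image_add_natCast _ htL.le] at hrows
  rw [card_image_add_natCast _ hsL.le] at hcols
  linarith

theorem not_add_mem_rect_and_sub_mem_rect_fst (hsL : s + 2 ≤ L) (htL : t + 2 ≤ L)
    (hz : z ∉ rect L a s t) : ¬ (z + (1, 0) ∈ rect L a s t ∧ z - (1, 0) ∈ rect L a s t) := by
  rintro ⟨h1, h2⟩
  simp only [mem_rect (by omega : s ≤ L) (by omega : t ≤ L), Prod.fst_add, Prod.snd_add,
    Prod.fst_sub, Prod.snd_sub, add_zero, sub_zero, add_sub_right_comm, sub_right_comm] at h1 h2 hz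
  exact hz ⟨val_lt_of_val_add_one_lt_of_val_sub_one_lt hsL h1.1 h2.1, h1.2⟩

theorem not_add_mem_rect_and_sub_mem_rect_snd (hsL : s + 2 ≤ L) (htL : t + 2 ≤ L)
    (hz : z ∉ rect L a s t) : ¬ (z + (0, 1) ∈ rect L a s t ∧ z - (0, 1) ∈ rect L a s t) := by
  rintro ⟨h1, h2⟩
  simp only [mem_rect (by omega : s ≤ L) (by omega : t ≤ L), Prod.fst_add, Prod.snd_add,
    Prod.fst_sub, Prod.snd_sub, add_zero, sub_zero, add_sub_right_comm, sub_right_comm] at h1 h2 hz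
  exact hz ⟨h1.1, val_lt_of_val_add_one_lt_of_val_sub_one_lt htL h1.2 h2.2⟩

theorem ham_droplet_ge {c : Fin 3} {h : ℝ} (hs : 1 ≤ s) (ht : 1 ≤ t) (hsL : s + 2 ≤ L)
    (htL : t + 2 ≤ L) (hh : h ≤ 4) (hz : z ∉ rect L a s t) (hc : c ≠ 0)
    (hcz : c = 2 ∨ ∀ y ∈ rect L a s t, ¬ nbr L z y) :
    2 * ((s : ℝ) + t) + 4 - h * ((s : ℝ) * t + 1 - (L : ℝ) ^ 2) ≤
      ham L h (droplet (rect L a s t) z c) := by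
  have hL : 2 ≤ L := by omega
  have hbulk := two_mul_add_le_bondEnergy_island (a := a) hs ht (by omega) (by omega)
  have hx := bondEnergy_droplet_ge (e := ((1, 0) : Site L)) (by simp [one_ne_zero_of_two_le hL])
    hz hc (hcz.imp_right fun hn => ⟨fun hm => hn _ hm (Or.inl rfl),
      fun hm => hn _ hm (Or.inr (Or.inl rfl))⟩)
    (not_add_mem_rect_and_sub_mem_rect_fst hsL htL hz)
  have hy := bondEnergy_droplet_ge (e := ((0, 1) : Site L)) (by simp [one_ne_zero_of_two_le hL])
    hz hc (hcz.imp_right fun hn => ⟨fun hm => hn _ hm (Or.inr (Or.inr (Or.inl rfl))),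
      fun hm => hn _ hm (Or.inr (Or.inr (Or.inr rfl)))⟩)
    (not_add_mem_rect_and_sub_mem_rect_snd hsL htL hz)
  have hsum := sum_sval_droplet hz c
  rw [card_rect (by omega) (by omega), card_site] at hsum
  have hv : sval c = 0 ∨ sval c = 1 := by fin_cases c <;> simp_all [sval]
  have hG : 2 * ((s : ℤ) + t) + 4 * (sval c + 1) ≤
      bondEnergy (1, 0) (sval ∘ droplet (rect L a s t) z c) +
        bondEnergy (0, 1) (sval ∘ droplet (rect L a s t) z c) := by
    linarith
  have hGR := (Int.cast_le (R := ℝ)).2 hG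
  rw [ham_eq, hsum]
  push_cast at hGR ⊢
  rcases hv with hv | hv <;> rw [hv] at hGR ⊢ <;> push_cast at hGR ⊢ <;> linarith

end Energy

section CriticalDroplets

variable {L : ℕ} [NeZero L] {n : ℕ}

theorem eq_droplet_of_Asites_eq {σ : Cfg L} {S : Finset (Site L)} {z : Site L}
    (hA : Asites L σ = insert z S) (hS : ∀ x ∈ S, σ x = 1) : σ = droplet S z (σ z) := by
  funext x
  by_cases hxz : x = z
  · subst hxz
    simp [droplet]
  · rw [droplet, Function.update_of_ne hxz, island]
    split_ifs with hxS
    · exact hS x hxS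
    · have : x ∉ Asites L σ := by simp [hA, hxz, hxS]
      simpa [Asites] using this

theorem one_le_n0 {h : ℝ} (h0 : 0 < h) (h2 : h < 2) : 1 ≤ n0 h :=
  Nat.le_floor (by rw [Nat.cast_one, le_div_iff₀ h0]; linarith)

theorem GammaC_add_two_le_ham {h : ℝ} (hn : 1 ≤ n0 h) (hh : h ≤ 4) (hL : 2 * (n0 h + 2) ≤ L)
    {σ : Cfg L} (hσ : σ ∈ setRplus L (n0 h) \ setRa L (n0 h)) : GammaC L h + 2 ≤ ham L h σ := by
  obtain ⟨⟨S, z, ⟨a, hSa⟩, hz, hA, hS⟩, hnotRa⟩ := hσ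
  have hc : σ z ≠ 0 := by
    have : z ∈ Asites L σ := hA ▸ mem_insert_self z S
    simpa [Asites] using this
  have hcz : σ z = 2 ∨ ∀ y ∈ S, ¬ nbr L z y := by
    by_contra! hcon
    obtain ⟨hc2, y, hy, hzy⟩ := hcon
    have hc1 : σ z = 1 := by omega
    exact hnotRa ⟨S, z, ⟨a, hSa⟩, hz, hA, hS, hc1, y, hy, hzy⟩
  rw [eq_droplet_of_Asites_eq hA hS]
  unfold GammaC
  rcases hSa with rfl | rfl
  · have := ham_droplet_ge hn (by omega) (by omega) (by omega) hh hz hc hcz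
    push_cast at this ⊢
    linarith
  · have := ham_droplet_ge (by omega) hn (by omega) (by omega) hh hz hc hcz
    push_cast at this ⊢
    linarith

theorem card_isCritRect_le : #(univ.filter (isCritRect L n)) ≤ 2 * L ^ 2 := by
  have hsub : univ.filter (isCritRect L n) ⊆
      univ.image (fun a => rect L a n (n + 1)) ∪ univ.image (fun a => rect L a (n + 1) n) := by
    intro S hS
    obtain ⟨a, rfl | rfl⟩ := (mem_filter.1 hS).2 <;> simp
  calc _ ≤ _ := card_le_card hsub
    _ ≤ _ := card_union_le _ _
    _ ≤ L ^ 2 + L ^ 2 := add_le_add (card_image_le.trans_eq (by rw [card_univ, card_site]))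
        (card_image_le.trans_eq (by rw [card_univ, card_site]))
    _ = 2 * L ^ 2 := by ring

theorem card_setRplus_le : #(univ.filter (· ∈ setRplus L n)) ≤ 6 * L ^ 4 := by
  have hsub : univ.filter (· ∈ setRplus L n) ⊆
      (univ.filter (isCritRect L n) ×ˢ (univ : Finset (Site L × Fin 3))).image
        fun p => droplet p.1 p.2.1 p.2.2 := by
    intro σ hσ
    obtain ⟨S, z, hS, -, hA, hS1⟩ := (mem_filter.1 hσ).2
    exact mem_image.2 ⟨(S, z, σ z), by simp [hS], (eq_droplet_of_Asites_eq hA hS1).symm⟩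
  calc _ ≤ _ := card_le_card hsub
    _ ≤ _ := card_image_le
    _ ≤ 2 * L ^ 2 * (L ^ 2 * 3) := by
        rw [card_product, card_univ, Fintype.card_prod, card_site, Fintype.card_fin]
        gcongr
        exact card_isCritRect_le
    _ = 6 * L ^ 4 := by ring

end CriticalDroplets

section Neighbours

variable {L : ℕ} [NeZero L] {n : ℕ}

theorem exists_eq_update_of_oneDiff {σ τ : Cfg L} (h : oneDiff L σ τ) :
    ∃ x, σ x ≠ τ x ∧ τ = Function.update σ x (τ x) := by
  obtain ⟨x, hx⟩ := card_eq_one.1 h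
  have hdiff : ∀ y, σ y ≠ τ y ↔ y = x := fun y => by
    simpa using congrArg (y ∈ ·) hx
  refine ⟨x, (hdiff x).2 rfl, funext fun y => ?_⟩
  by_cases hy : y = x
  · subst hy
    simp
  · rw [Function.update_of_ne hy]
    exact (not_not.1 (mt (hdiff y).1 hy)).symm

theorem card_oneDiff_le (σ : Cfg L) :
    #(univ.filter fun τ => Nsz L τ ≤ Nsz L σ ∧ oneDiff L σ τ) ≤ 3 * Nsz L σ := by
  have hsub : univ.filter (fun τ => Nsz L τ ≤ Nsz L σ ∧ oneDiff L σ τ) ⊆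
      (Asites L σ ×ˢ univ).image fun p => Function.update σ p.1 p.2 := by
    intro τ hτ
    obtain ⟨hN, hone⟩ := (mem_filter.1 hτ).2
    obtain ⟨x, hx, hτx⟩ := exists_eq_update_of_oneDiff hone
    refine mem_image.2 ⟨(x, τ x), mem_product.2 ⟨?_, mem_univ _⟩, hτx.symm⟩
    -- flipping a `-1`-spin would enlarge the support
    by_contra hxA
    have hσx : σ x = 0 := by simpa [Asites] using hxA
    have hgrow : insert x (Asites L σ) ⊆ Asites L τ := by
      intro y hy
      rcases mem_insert.1 hy with rfl | hyA
      · simpa [Asites, ← hσx] using hx.symm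
      · have hyx : y ≠ x := by rintro rfl; exact hxA hyA
        rw [hτx]
        simpa [Asites, Function.update_of_ne hyx] using hyA
    have := card_le_card hgrow
    rw [card_insert_of_notMem hxA] at this
    exact absurd hN (by rw [Nsz, Nsz]; omega)
  calc _ ≤ _ := card_le_card hsub
    _ ≤ _ := card_image_le
    _ = 3 * Nsz L σ := by rw [card_product, card_univ, Fintype.card_fin, Nsz, mul_comm]

theorem Nsz_of_mem_setRplus (hL : n + 1 ≤ L) {σ : Cfg L} (hσ : σ ∈ setRplus L n) :
    Nsz L σ = n * (n + 1) + 1 := by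
  obtain ⟨S, z, ⟨a, hS⟩, hz, hA, -⟩ := hσ
  rw [Nsz, hA, card_insert_of_notMem hz]
  rcases hS with rfl | rfl <;> rw [card_rect (by omega) (by omega)]
  ring

theorem Nsz_le_of_mem_valleyM (hL : n + 1 ≤ L) {τ : Cfg L} (hτ : τ ∈ valleyM L n) :
    Nsz L τ ≤ n * (n + 1) + 1 := by
  rcases hτ with hτ | hτ
  · exact Nat.le_succ_of_le hτ
  · exact (Nsz_of_mem_setRplus hL hτ).le

theorem sum_oneDiff_valleyM_le (hL : n + 1 ≤ L) {σ : Cfg L} (hσ : σ ∈ setRplus L n) (h β : ℝ) :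
    ∑ τ, (if τ ∈ valleyM L n ∧ oneDiff L σ τ then min (gw L h β σ) (gw L h β τ) else 0) ≤
      3 * ((n * (n + 1) + 1 : ℕ) : ℝ) * gw L h β σ := by
  have hN := Nsz_of_mem_setRplus hL hσ
  calc _ ≤ ∑ τ ∈ univ.filter (fun τ => Nsz L τ ≤ Nsz L σ ∧ oneDiff L σ τ), gw L h β σ := by
        rw [sum_filter]
        refine sum_le_sum fun τ _ => ?_
        split_ifs with hV hN'
        · exact min_le_left _ _
        · exact absurd ⟨hN ▸ Nsz_le_of_mem_valleyM hL hV.1, hV.2⟩ hN'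
        · exact (Real.exp_pos _).le
        · exact le_rfl
    _ = #(univ.filter fun τ => Nsz L τ ≤ Nsz L σ ∧ oneDiff L σ τ) * gw L h β σ := by
        rw [sum_const, nsmul_eq_mul]
    _ ≤ _ := by
        gcongr
        · exact (Real.exp_pos _).le
        · exact_mod_cast (card_oneDiff_le σ).trans_eq (by rw [hN])

end Neighbours

theorem sum_badBoundary_le {L : ℕ} [NeZero L] {h β : ℝ} (hn : 1 ≤ n0 h) (hh : h ≤ 4)
    (hL : 2 * (n0 h + 2) ≤ L) (hβ : 0 ≤ β) (X : Set (Cfg L)) [DecidablePred (· ∈ X)] :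
    (∑ σ : Cfg L, ∑ τ : Cfg L,
      if σ ∈ setRplus L (n0 h) \ setRa L (n0 h) ∧ τ ∈ valleyM L (n0 h) \ X ∧ oneDiff L σ τ
      then min (gw L h β σ) (gw L h β τ) else 0) ≤
    18 * ((n0 h * (n0 h + 1) + 1 : ℕ) : ℝ) * L ^ 4 * Real.exp (-β * (GammaC L h + 2)) := by
  set E := Real.exp (-β * (GammaC L h + 2))
  set N := ((n0 h * (n0 h + 1) + 1 : ℕ) : ℝ)
  have hinner : ∀ σ, (∑ τ : Cfg L,
      if σ ∈ setRplus L (n0 h) \ setRa L (n0 h) ∧ τ ∈ valleyM L (n0 h) \ X ∧ oneDiff L σ τ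
      then min (gw L h β σ) (gw L h β τ) else 0) ≤
      if σ ∈ setRplus L (n0 h) \ setRa L (n0 h) then 3 * N * E else 0 := by
    intro σ
    split_ifs with hσ
    · calc _ ≤ ∑ τ, (if τ ∈ valleyM L (n0 h) ∧ oneDiff L σ τ
              then min (gw L h β σ) (gw L h β τ) else 0) := by
            refine sum_le_sum fun τ _ => ?_
            split_ifs with h1 h2
            · exact le_rfl
            · exact absurd ⟨h1.2.1.1, h1.2.2⟩ h2
            · exact le_min (Real.exp_pos _).le (Real.exp_pos _).le
            · exact le_rfl
        _ ≤ 3 * N * gw L h β σ := sum_oneDiff_valleyM_le (by omega) hσ.1 h β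
        _ ≤ 3 * N * E := by
            gcongr
            exact Real.exp_le_exp.2 (by nlinarith [GammaC_add_two_le_ham hn hh hL hσ])
    · simp [hσ]
  have hcard : #(univ.filter (· ∈ setRplus L (n0 h) \ setRa L (n0 h))) ≤ 6 * L ^ 4 :=
    (card_le_card fun σ hσ => mem_filter.2 ⟨mem_univ σ, (mem_filter.1 hσ).2.1⟩).trans
      card_setRplus_le
  calc _ ≤ ∑ σ : Cfg L, if σ ∈ setRplus L (n0 h) \ setRa L (n0 h) then 3 * N * E else 0 :=
        sum_le_sum fun σ _ => hinner σ
    _ = #(univ.filter (· ∈ setRplus L (n0 h) \ setRa L (n0 h))) * (3 * N * E) := by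
        rw [← sum_filter, sum_const, nsmul_eq_mul]
    _ ≤ (6 * L ^ 4 : ℕ) * (3 * N * E) := by gcongr
    _ = 18 * N * L ^ 4 * E := by push_cast; ring

end BC

theorem stmt_4_general (h : ℝ) (h0 : 0 < h) (h2 : h < 2) :
    ∃ C0 : ℝ, 0 < C0 ∧ ∀ β : ℝ, C0 ≤ β → ∀ (L : ℕ) [NeZero L],
      2 * (BC.n0 h + 2) ≤ L →
      (∑ σ : BC.Cfg L, ∑ τ : BC.Cfg L,
        if σ ∈ BC.setRplus L (BC.n0 h) \ BC.setRa L (BC.n0 h) ∧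
           τ ∈ BC.valleyM L (BC.n0 h) \
              ((BC.setB L (BC.n0 h) \ BC.setR L (BC.n0 h)) ∪
               (BC.setRplus L (BC.n0 h) \ BC.setRa L (BC.n0 h))) ∧
           BC.oneDiff L σ τ
        then min (BC.gw L h β σ) (BC.gw L h β τ) else 0)
      ≤ C0 * (L : ℝ) ^ 2 * Real.exp (-β * BC.GammaC L h) *
          ((L : ℝ) ^ 2 * Real.exp (-2 * β) + Real.exp (-(10 - h) * β)) := by
  have hC0 : (0 : ℝ) < 18 * ((BC.n0 h * (BC.n0 h + 1) + 1 : ℕ) : ℝ) := by positivity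
  refine ⟨_, hC0, fun β hβ L _ hL => ?_⟩
  calc _ ≤ _ := BC.sum_badBoundary_le (BC.one_le_n0 h0 h2) (by linarith) hL (hC0.le.trans hβ) _
    _ = 18 * ((BC.n0 h * (BC.n0 h + 1) + 1 : ℕ) : ℝ) * L ^ 2 * Real.exp (-β * BC.GammaC L h) *
          (L ^ 2 * Real.exp (-2 * β)) := by
        rw [show -β * (BC.GammaC L h + 2) = -β * BC.GammaC L h + -2 * β by ring, Real.exp_add]
        ring
    _ ≤ _ := by
        gcongr
        exact le_add_of_nonneg_right (Real.exp_pos _).le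

/-- Assertion (fasA) : bound on the contribution of `B₂ = R⁺ \ Rᵃ` to the Dirichlet form
of the indicator of the bad boundary of the valley of `-1`. -/
theorem stmt_4 (h : ℝ) (h0 : 0 < h) (h2 : h < 2)
    (hirr : ∀ m : ℤ, (2 : ℝ) / h ≠ (m : ℝ)) :
    ∃ C0 : ℝ, 0 < C0 ∧ ∀ β : ℝ, C0 ≤ β → ∀ (L : ℕ) [NeZero L],
      2 * (BC.n0 h + 2) ≤ L →
      (∑ σ : BC.Cfg L, ∑ τ : BC.Cfg L,
        if σ ∈ BC.setRplus L (BC.n0 h) \ BC.setRa L (BC.n0 h) ∧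
           τ ∈ BC.valleyM L (BC.n0 h) \
              ((BC.setB L (BC.n0 h) \ BC.setR L (BC.n0 h)) ∪
               (BC.setRplus L (BC.n0 h) \ BC.setRa L (BC.n0 h))) ∧
           BC.oneDiff L σ τ
        then min (BC.gw L h β σ) (BC.gw L h β τ) else 0)
      ≤ C0 * (L : ℝ) ^ 2 * Real.exp (-β * BC.GammaC L h) *
          ((L : ℝ) ^ 2 * Real.exp (-2 * β) + Real.exp (-(10 - h) * β)) :=
  stmt_4_general h h0 h2
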